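/- arXiv:1106.4325 — 2 statements merged into one kernel-verified Lean document; each statement's English description precedes it below -/
import Mathlib

section
/- In model M, the second moment of the number of white balls after n draws is E(W_n²) = [C(n−1+λ_1, n)·C(n−1+λ_2, n) / (C(n−1+T_0/(mc), n)·C(n−1+(T_0−1)/(mc), n))] · ( W_0² + (W_0·c²·m/T_0) · Σ_{ℓ=0}^{n−1} [(ℓ+(T_0−m)/(mc))/(ℓ+(T_0−1)/(mc))] · [C(ℓ+T_0/(mc), ℓ+1)·C(ℓ+(T_0−1)/(mc), ℓ+1) / (C(ℓ+λ_1, ℓ+1)·C(ℓ+λ_2, ℓ+1))] ), where C(x, n) denotes the generalized binomial coefficient for real x; in particular this determines the variance V(W_n) = E(W_n²) − E(W_n)². -/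
open Finset

/-- Total number of balls after `n` draws: `T_n = W_0 + B_0 + n·m·c`. -/
def urnT (W0 B0 m c n : ℕ) : ℕ := W0 + B0 + n * m * c

/-- Probability mass function of the number of white balls after `n` draws in the
Chen–Wei model `M` (at each step `m` balls are drawn without replacement and, for
each drawn ball, `c` balls of the same color are added). -/
noncomputable def massM (W0 B0 m c : ℕ) : ℕ → ℕ → ℝ
  | 0 => fun v => if v = W0 then 1 else 0
  | n + 1 => fun v =>
      ∑ w ∈ Finset.range (urnT W0 B0 m c n + 1), ∑ k ∈ Finset.range (m + 1),
        if v = w + c * k then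
          massM W0 B0 m c n w *
            ((Nat.choose w k * Nat.choose (urnT W0 B0 m c n - w) (m - k) : ℝ) /
              (Nat.choose (urnT W0 B0 m c n) m : ℝ))
        else 0

/-- The `s`-th moment `E(W_n^s)` of the number of white balls in model `M`. -/
noncomputable def momM (W0 B0 m c s n : ℕ) : ℝ :=
  ∑ w ∈ Finset.range (urnT W0 B0 m c n + 1), massM W0 B0 m c n w * (w : ℝ) ^ s

/-- Generalized binomial coefficient `C(x,n) = x(x-1)⋯(x-n+1)/n!` for real `x`. -/
noncomputable def gchoose (x : ℝ) (n : ℕ) : ℝ :=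
  (∏ i ∈ Finset.range n, (x - (i : ℝ))) / (Nat.factorial n : ℝ)

/-!
Given `W_n = w`, the number `K` of white balls drawn at step `n + 1` is hypergeometric, and
Vandermonde's identity gives its factorial moments `E C(K, j) = C(w, j) C(m, j) / C(T_n, j)`.
Hence `E W_{n+1} = (1 + mc / T_n) E W_n`, so `E W_n = W_0 T_n / T_0`, and `E W_{n+1}²` is
`a_n E W_n² + b_n`, a first-order linear recurrence. Since `-λ₁, -λ₂` are the roots of
`x ↦ T_x (T_x - 1) + 2mc (T_x - 1) + mc (mc - c)` with `T_x = T_0 + x mc`, the coefficient is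
`a_n = (λ₁ + n)(λ₂ + n) / ((T_0 / mc + n)((T_0 - 1) / mc + n))`, so the products of the `a_n`
are ratios of generalized binomial coefficients, and the formula is the solution
`x_n = (∏ a) (x_0 + ∑ b_ℓ / ∏_{i ≤ ℓ} a_i)` of the recurrence.
-/

theorem sum_choose_mul_choose_mul_choose (w b M j : ℕ) (hjM : j ≤ M) :
    ∑ k ∈ range (M + 1), w.choose k * k.choose j * b.choose (M - k) =
      w.choose j * (w + b - j).choose (M - j) := by
  have hsplit : M + 1 = j + (M - j + 1) := by omega
  rw [hsplit, sum_range_add, sum_eq_zero fun k hk => by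
    rw [Nat.choose_eq_zero_of_lt (mem_range.mp hk), mul_zero, zero_mul], zero_add]
  have hterm : ∀ i, w.choose (j + i) * (j + i).choose j * b.choose (M - (j + i)) =
      w.choose j * ((w - j).choose i * b.choose (M - j - i)) := fun i => by
    rw [Nat.choose_mul (Nat.le_add_right j i), Nat.add_sub_cancel_left, Nat.sub_sub, mul_assoc]
  simp_rw [hterm, ← mul_sum]
  rw [← Finset.Nat.sum_antidiagonal_eq_sum_range_succ
      (fun i l => (w - j).choose i * b.choose l), ← Nat.add_choose_eq]
  rcases le_or_gt j w with h | h
  · rw [Nat.sub_add_comm h]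
  · rw [Nat.choose_eq_zero_of_lt h, zero_mul, zero_mul]

noncomputable def hyperProb (T w M k : ℕ) : ℝ :=
  (w.choose k * (T - w).choose (M - k) : ℝ) / T.choose M

theorem sum_choose_mul_hyperProb {T w M : ℕ} (hw : w ≤ T) (hM : M ≤ T) (j : ℕ) :
    ∑ k ∈ range (M + 1), (k.choose j : ℝ) * hyperProb T w M k =
      w.choose j * M.choose j / T.choose j := by
  rcases lt_or_ge M j with hMj | hjM
  · rw [Nat.choose_eq_zero_of_lt hMj, sum_eq_zero fun k hk => by
      rw [Nat.choose_eq_zero_of_lt (by rw [mem_range] at hk; omega), Nat.cast_zero, zero_mul]]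
    simp
  have hnat : (∑ k ∈ range (M + 1), k.choose j * (w.choose k * (T - w).choose (M - k))) *
      T.choose j = w.choose j * M.choose j * T.choose M := by
    have hvand := sum_choose_mul_choose_mul_choose w (T - w) M j hjM
    rw [Nat.add_sub_cancel' hw] at hvand
    calc _ = (∑ k ∈ range (M + 1), w.choose k * k.choose j * (T - w).choose (M - k)) *
          T.choose j := by
          congr 1; exact sum_congr rfl fun k _ => by ring
      _ = w.choose j * (T.choose j * (T - j).choose (M - j)) := by rw [hvand]; ring
      _ = _ := by rw [← Nat.choose_mul hjM]; ring
  have hTM : (T.choose M : ℝ) ≠ 0 := by exact_mod_cast (Nat.choose_pos hM).ne'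
  have hTj : (T.choose j : ℝ) ≠ 0 := by exact_mod_cast (Nat.choose_pos (hjM.trans hM)).ne'
  simp only [hyperProb, mul_div_assoc', ← sum_div]
  rw [div_eq_div_iff hTM hTj]
  exact_mod_cast hnat

theorem sum_hyperProb_mul_add {T w M : ℕ} (hw : w ≤ T) (hM : M ≤ T) (c : ℝ) :
    ∑ k ∈ range (M + 1), hyperProb T w M k * (w + c * k) = w + c * (w * M / T) := by
  calc _ = w * ∑ k ∈ range (M + 1), (k.choose 0 : ℝ) * hyperProb T w M k +
        c * ∑ k ∈ range (M + 1), (k.choose 1 : ℝ) * hyperProb T w M k := by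
        rw [mul_sum, mul_sum, ← sum_add_distrib]
        refine sum_congr rfl fun k _ => ?_
        simp only [Nat.choose_zero_right, Nat.choose_one_right]
        push_cast; ring
    _ = _ := by
        simp only [sum_choose_mul_hyperProb hw hM]
        simp only [Nat.choose_zero_right, Nat.choose_one_right]
        push_cast; ring

theorem sum_hyperProb_mul_add_sq {T w M : ℕ} (hw : w ≤ T) (hM : M ≤ T) (c : ℝ) :
    ∑ k ∈ range (M + 1), hyperProb T w M k * (w + c * k) ^ 2 =
      w ^ 2 + (2 * c * w + c ^ 2) * (w * M / T) +
        c ^ 2 * (w * (w - 1)) * (M * (M - 1)) / (T * (T - 1)) := by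
  calc _ = w ^ 2 * ∑ k ∈ range (M + 1), (k.choose 0 : ℝ) * hyperProb T w M k +
        (2 * c * w + c ^ 2) * ∑ k ∈ range (M + 1), (k.choose 1 : ℝ) * hyperProb T w M k +
        2 * c ^ 2 * ∑ k ∈ range (M + 1), (k.choose 2 : ℝ) * hyperProb T w M k := by
        rw [mul_sum, mul_sum, mul_sum, ← sum_add_distrib, ← sum_add_distrib]
        refine sum_congr rfl fun k _ => ?_
        simp only [Nat.choose_zero_right, Nat.choose_one_right, Nat.cast_choose_two]
        push_cast; ring
    _ = _ := by
        simp only [sum_choose_mul_hyperProb hw hM]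
        simp only [Nat.choose_zero_right, Nat.choose_one_right, Nat.cast_choose_two,
          div_div_eq_mul_div]
        push_cast; ring

noncomputable def secondMomentFactor (m c T : ℝ) : ℝ :=
  1 + 2 * c * m / T + c ^ 2 * m * (m - 1) / (T * (T - 1))

section Urn

variable (W0 B0 m c : ℕ)

theorem momM_zero (s : ℕ) : momM W0 B0 m c s 0 = (W0 : ℝ) ^ s := by
  have hW0 : W0 ∈ range (urnT W0 B0 m c 0 + 1) := mem_range.mpr (by simp [urnT])
  simp only [momM, massM, ite_mul, one_mul, zero_mul, sum_ite_eq', hW0, if_true]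

theorem momM_succ (s n : ℕ) :
    momM W0 B0 m c s (n + 1) = ∑ w ∈ range (urnT W0 B0 m c n + 1), massM W0 B0 m c n w *
      ∑ k ∈ range (m + 1), hyperProb (urnT W0 B0 m c n) w m k * ((w : ℝ) + c * k) ^ s := by
  simp only [momM, massM, sum_mul, ite_mul, zero_mul]
  rw [sum_comm]
  refine sum_congr rfl fun w hw => ?_
  rw [sum_comm, mul_sum]
  refine sum_congr rfl fun k hk => ?_
  have hnext : w + c * k ∈ range (urnT W0 B0 m c (n + 1) + 1) := by
    rw [mem_range] at hw hk ⊢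
    have : c * k ≤ m * c := by rw [mul_comm]; exact Nat.mul_le_mul_right c (by omega)
    simp only [urnT] at hw ⊢
    nlinarith
  rw [sum_ite_eq', if_pos hnext, hyperProb]
  push_cast
  ring

theorem momM_one (hT0 : m ≤ W0 + B0) (hpos : 0 < W0 + B0) (n : ℕ) :
    momM W0 B0 m c 1 n = W0 * urnT W0 B0 m c n / (W0 + B0 : ℝ) := by
  have ht : (W0 + B0 : ℝ) ≠ 0 := by exact_mod_cast hpos.ne'
  induction n with
  | zero =>
    rw [momM_zero, urnT, zero_mul, zero_mul, add_zero]
    push_cast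
    field_simp
  | succ n ih =>
    have hT : (W0 + B0 + n * m * c : ℝ) ≠ 0 := by positivity
    have hstep : ∀ w ∈ range (urnT W0 B0 m c n + 1), massM W0 B0 m c n w *
        ∑ k ∈ range (m + 1), hyperProb (urnT W0 B0 m c n) w m k * ((w : ℝ) + c * k) ^ 1 =
        (1 + c * m / urnT W0 B0 m c n) * (massM W0 B0 m c n w * (w : ℝ) ^ 1) := fun w hw => by
      simp only [pow_one]
      rw [sum_hyperProb_mul_add (Nat.lt_succ_iff.mp (mem_range.mp hw))
        (by simp only [urnT]; omega)]
      ring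
    rw [momM_succ, sum_congr rfl hstep, ← mul_sum]
    change _ * momM W0 B0 m c 1 n = _
    rw [ih]
    simp only [urnT]; push_cast
    field_simp
    ring

theorem momM_two_succ (hT0 : m ≤ W0 + B0) (h2 : 2 ≤ W0 + B0) (n : ℕ) :
    momM W0 B0 m c 2 (n + 1) =
      secondMomentFactor m c (urnT W0 B0 m c n) * momM W0 B0 m c 2 n +
        W0 * c ^ 2 * m / (W0 + B0 : ℝ) *
          ((urnT W0 B0 m c n - m) / (urnT W0 B0 m c n - 1 : ℝ)) := by
  have hsq : momM W0 B0 m c 2 (n + 1) =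
      secondMomentFactor m c (urnT W0 B0 m c n) * momM W0 B0 m c 2 n +
        (c ^ 2 * m / urnT W0 B0 m c n -
          c ^ 2 * m * (m - 1) / (urnT W0 B0 m c n * (urnT W0 B0 m c n - 1 : ℝ))) *
          momM W0 B0 m c 1 n := by
    rw [momM_succ]
    simp only [momM, secondMomentFactor]
    rw [mul_sum, mul_sum, ← sum_add_distrib]
    refine sum_congr rfl fun w hw => ?_
    rw [sum_hyperProb_mul_add_sq (Nat.lt_succ_iff.mp (mem_range.mp hw))
      (by simp only [urnT]; omega)]
    ring
  have h2' : (2 : ℝ) ≤ W0 + B0 := by exact_mod_cast h2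
  have hmc : (0 : ℝ) ≤ n * m * c := by positivity
  have ht : (W0 + B0 : ℝ) ≠ 0 := by linarith
  have hT : (W0 + B0 + n * m * c : ℝ) ≠ 0 := by linarith
  have hT1 : (W0 + B0 + n * m * c - 1 : ℝ) ≠ 0 := by linarith
  rw [hsq, momM_one W0 B0 m c hT0 (by omega)]
  simp only [urnT]
  push_cast
  field_simp
  ring

end Urn

theorem eq_prod_mul_add_sum_div_prod {K : Type*} [Field K] {x a b : ℕ → K}
    (ha : ∀ n, a n ≠ 0) (hx : ∀ n, x (n + 1) = a n * x n + b n) (n : ℕ) :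
    x n = (∏ i ∈ range n, a i) * (x 0 + ∑ l ∈ range n, b l / ∏ i ∈ range (l + 1), a i) := by
  induction n with
  | zero => simp
  | succ n ih =>
    have hprod : ∏ i ∈ range n, a i ≠ 0 := prod_ne_zero_iff.mpr fun i _ => ha i
    rw [hx, ih, sum_range_succ, prod_range_succ]
    field_simp [ha n]
    ring

theorem gchoose_sub_one_add (x : ℝ) (n : ℕ) :
    gchoose (n - 1 + x) n = (∏ i ∈ range n, (x + i)) / n.factorial := by
  rw [gchoose, ← prod_range_reflect]
  congr 1
  refine prod_congr rfl fun i hi => ?_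
  have := mem_range.mp hi
  rw [Nat.cast_sub (by omega), Nat.cast_sub (by omega)]
  push_cast
  ring

theorem gchoose_ratio (x y u v : ℝ) (n : ℕ) :
    gchoose (n - 1 + x) n * gchoose (n - 1 + y) n /
        (gchoose (n - 1 + u) n * gchoose (n - 1 + v) n) =
      ∏ i ∈ range n, (x + i) * (y + i) / ((u + i) * (v + i)) := by
  simp only [gchoose_sub_one_add, div_mul_div_comm, prod_div_distrib, prod_mul_distrib]
  exact div_div_div_cancel_right₀ (by positivity) _ _

theorem secondMomentFactor_pos {m c T : ℝ} (hm : 1 ≤ m) (hc : 0 ≤ c) (hT : 1 < T) :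
    0 < secondMomentFactor m c T := by
  have : 0 ≤ c ^ 2 * m * (m - 1) / (T * (T - 1)) := by
    apply div_nonneg
    · exact mul_nonneg (mul_nonneg (sq_nonneg c) (by linarith)) (by linarith)
    · exact mul_nonneg (by linarith) (by linarith)
  have : 0 ≤ 2 * c * m / T := by positivity
  unfold secondMomentFactor
  linarith

theorem secondMomentFactor_eq {m c t lam1 lam2 : ℝ} (hm : 0 < m) (hc : 0 < c)
    (hlam1 : lam1 = (-(1/2) + m * c + t + (1/2) * √(1 + 4 * m * c * (1 + c))) / (m * c))
    (hlam2 : lam2 = (-(1/2) + m * c + t - (1/2) * √(1 + 4 * m * c * (1 + c))) / (m * c))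
    {x : ℝ} (hT : t + x * m * c ≠ 0) (hT1 : t + x * m * c - 1 ≠ 0) :
    secondMomentFactor m c (t + x * m * c) =
      (lam1 + x) * (lam2 + x) / ((t / (m * c) + x) * ((t - 1) / (m * c) + x)) := by
  have hD : m * c ≠ 0 := by positivity
  have hsq : √(1 + 4 * m * c * (1 + c)) ^ 2 = 1 + 4 * m * c * (1 + c) :=
    Real.sq_sqrt (by positivity)
  have hlam : (lam1 + x) * (lam2 + x) * (m * c) ^ 2 = (t + x * m * c) * (t + x * m * c - 1) +
      2 * c * m * (t + x * m * c - 1) + c ^ 2 * m * (m - 1) := by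
    rw [hlam1, hlam2, div_add' _ _ _ hD, div_add' _ _ _ hD, div_mul_div_comm, ← sq,
      div_mul_cancel₀ _ (pow_ne_zero 2 hD)]
    linear_combination (-1/4 : ℝ) * hsq
  have hden : (t / (m * c) + x) * ((t - 1) / (m * c) + x) * (m * c) ^ 2 =
      (t + x * m * c) * (t + x * m * c - 1) := by
    field_simp
    ring
  rw [← mul_div_mul_right ((lam1 + x) * (lam2 + x)) _ (pow_ne_zero 2 hD), hlam, hden,
    secondMomentFactor]
  generalize t + x * m * c = T at hT hT1 ⊢
  field_simp

/-- In model `M`, the exact second moment `E(W_n²)`, which determines the variance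
`V(W_n) = E(W_n²) − E(W_n)²`. -/
theorem modelM_secondMoment (W0 B0 m c : ℕ) (hm : 1 ≤ m) (hc : 1 ≤ c)
    (hW0 : 1 ≤ W0) (hB0 : 1 ≤ B0) (hT0 : m ≤ W0 + B0)
    (lam1 lam2 : ℝ)
    (hlam1 : lam1 = (-(1/2) + (m : ℝ) * c + ((W0 : ℝ) + B0) +
      (1/2) * Real.sqrt (1 + 4 * (m : ℝ) * c * (1 + (c : ℝ)))) / ((m : ℝ) * c))
    (hlam2 : lam2 = (-(1/2) + (m : ℝ) * c + ((W0 : ℝ) + B0) -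
      (1/2) * Real.sqrt (1 + 4 * (m : ℝ) * c * (1 + (c : ℝ)))) / ((m : ℝ) * c)) :
    ∀ n : ℕ, momM W0 B0 m c 2 n =
      (gchoose ((n : ℝ) - 1 + lam1) n * gchoose ((n : ℝ) - 1 + lam2) n) /
        (gchoose ((n : ℝ) - 1 + ((W0 : ℝ) + B0) / ((m : ℝ) * c)) n *
          gchoose ((n : ℝ) - 1 + (((W0 : ℝ) + B0) - 1) / ((m : ℝ) * c)) n) *
      ((W0 : ℝ) ^ 2 + (W0 : ℝ) * (c : ℝ) ^ 2 * m / ((W0 : ℝ) + B0) *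
        ∑ ℓ ∈ Finset.range n,
          (((ℓ : ℝ) + (((W0 : ℝ) + B0) - m) / ((m : ℝ) * c)) /
              ((ℓ : ℝ) + (((W0 : ℝ) + B0) - 1) / ((m : ℝ) * c))) *
            (gchoose ((ℓ : ℝ) + ((W0 : ℝ) + B0) / ((m : ℝ) * c)) (ℓ + 1) *
              gchoose ((ℓ : ℝ) + (((W0 : ℝ) + B0) - 1) / ((m : ℝ) * c)) (ℓ + 1)) /
            (gchoose ((ℓ : ℝ) + lam1) (ℓ + 1) * gchoose ((ℓ : ℝ) + lam2) (ℓ + 1))) := by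
  intro n
  have hmR : (0 : ℝ) < m := by exact_mod_cast hm
  have hcR : (0 : ℝ) < c := by exact_mod_cast hc
  have hT : ∀ i : ℕ, (urnT W0 B0 m c i : ℝ) = W0 + B0 + i * m * c := fun i => by
    simp [urnT]
  have hT2 : ∀ i : ℕ, (2 : ℝ) ≤ urnT W0 B0 m c i := fun i => by
    exact_mod_cast (show 2 ≤ urnT W0 B0 m c i by simp only [urnT]; omega)
  have hfactor : ∀ i : ℕ, secondMomentFactor m c (urnT W0 B0 m c i) =
      (lam1 + i) * (lam2 + i) /
        (((W0 + B0) / (m * c) + i) * ((W0 + B0 - 1) / (m * c) + i)) := fun i => by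
    have h2 := hT2 i
    rw [hT] at h2 ⊢
    exact secondMomentFactor_eq hmR hcR hlam1 hlam2 (by linarith) (by linarith)
  have hrec : ∀ i : ℕ, momM W0 B0 m c 2 (i + 1) =
      secondMomentFactor m c (urnT W0 B0 m c i) * momM W0 B0 m c 2 i +
        W0 * c ^ 2 * m / (W0 + B0 : ℝ) *
          ((i + (W0 + B0 - m) / (m * c)) / (i + (W0 + B0 - 1) / (m * c))) := fun i => by
    rw [momM_two_succ W0 B0 m c hT0 (by omega), hT]
    field_simp
    ring
  rw [eq_prod_mul_add_sum_div_prod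
    (fun i => (secondMomentFactor_pos (by exact_mod_cast hm) hcR.le (by linarith [hT2 i])).ne')
    hrec n, momM_zero, mul_sum]
  simp only [hfactor, ← gchoose_ratio]
  congr 2
  refine sum_congr rfl fun l _ => ?_
  push_cast
  simp only [add_sub_cancel_right, div_div_eq_mul_div]
  ring
end

section
/- In model M, for every s ≥ 1 the limit lim_{n→∞} E(W_n^s)/n^s exists and is finite; moreover E(W_n^s) ≤ (n·m·c + T_0)^s for all n, so the almost-sure limit W_∞ of W_n/T_n has moments E(W_∞^s) = lim_{n→∞} E(W_n^s)/(n·m·c)^s and its distribution is uniquely determined by these moments. -/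
/-!
Given `W_n`, the number of white balls among the `m` drawn is hypergeometric with mean
`m W_n / T_n`, so `E[W_{n+1} | ℱ_n] = W_n (T_n + m c) / T_n = W_n T_{n+1} / T_n`: the white
fraction `X_n = W_n / T_n` is a martingale with values in `[0, 1]`. It therefore converges almost
surely to some `W_∞`, and by dominated convergence `E[X_n^s] → E[W_∞^s]`; since
`T_n ~ n m c`, this gives `E[W_n^s] / (n m c)^s → E[W_∞^s]`.

The law of `W_∞` is determined by its moments: a probability measure with the same moments has
even moments at most `1`, hence (Markov) lives on `[-1, 1]`, where polynomials are uniformly dense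
in the continuous functions (Weierstrass). Since `E[W_∞] = W_0 / T_0 > 0`, the moments do not
vanish, so a measure with the same moments integrates every `x ↦ x^s` (the integral of a
non-integrable function is `0`).
-/

open MeasureTheory Filter

open Finset Topology

namespace Nat

theorem sum_range_choose_mul_choose (w u m : ℕ) :
    ∑ k ∈ range (m + 1), w.choose k * u.choose (m - k) = (w + u).choose m := by
  rw [Nat.add_choose_eq, Finset.Nat.sum_antidiagonal_eq_sum_range_succ_mk]

theorem sum_range_mul_choose_mul_choose_mul_add (w u m : ℕ) :
    (∑ k ∈ range (m + 1), k * (w.choose k * u.choose (m - k))) * (w + u)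
      = m * w * (w + u).choose m := by
  rcases m with _ | m
  · simp
  rcases w with _ | w
  · refine (mul_eq_zero_of_left (sum_eq_zero fun k _ => ?_) _).trans (by simp)
    rcases k with _ | k <;> simp
  have hterm (j : ℕ) : (j + 1) * ((w + 1).choose (j + 1) * u.choose (m + 1 - (j + 1)))
      = (w + 1) * (w.choose j * u.choose (m - j)) := by
    rw [Nat.add_sub_add_right, ← mul_assoc, mul_comm (j + 1), ← Nat.add_one_mul_choose_eq,
      mul_assoc]
  rw [sum_range_succ', zero_mul, add_zero]
  simp_rw [hterm, ← mul_sum, sum_range_choose_mul_choose]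
  rw [show w + 1 + u = w + u + 1 by ring, mul_assoc, mul_comm ((w + u).choose m),
    Nat.add_one_mul_choose_eq]
  ring

end Nat

theorem sum_range_add_mul_choose_mul_choose_div (w T m : ℕ) (c : ℝ) (hwT : w ≤ T) (hmT : m ≤ T) :
    ∑ k ∈ range (m + 1),
        (w + c * k) * ((w.choose k * (T - w).choose (m - k) : ℝ) / T.choose m)
      = w * (T + m * c) / T := by
  obtain ⟨u, rfl⟩ := Nat.exists_eq_add_of_le hwT
  rw [Nat.add_sub_cancel_left]
  have hC : ((w + u).choose m : ℝ) ≠ 0 := by exact_mod_cast (Nat.choose_pos hmT).ne'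
  rcases Nat.eq_zero_or_pos (w + u) with hT | hT
  · obtain ⟨rfl, rfl⟩ : w = 0 ∧ u = 0 := by omega
    obtain rfl : m = 0 := by omega
    simp
  have hmass : ∑ k ∈ range (m + 1), (w.choose k * u.choose (m - k) : ℝ) = (w + u).choose m := by
    exact_mod_cast Nat.sum_range_choose_mul_choose w u m
  have hmean : (∑ k ∈ range (m + 1), (k * (w.choose k * u.choose (m - k)) : ℝ)) * (w + u)
      = m * w * (w + u).choose m := by
    exact_mod_cast Nat.sum_range_mul_choose_mul_choose_mul_add w u m
  have hT' : ((w + u : ℕ) : ℝ) ≠ 0 := by positivity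
  push_cast at hC hT' ⊢
  simp_rw [← mul_div_assoc, ← sum_div, add_mul, sum_add_distrib, ← mul_sum, mul_assoc, ← mul_sum]
  rw [hmass, div_eq_div_iff hC hT']
  linear_combination c * hmean

section CondExp

variable {Ω ι : Type*} {m m₀ : MeasurableSpace Ω} {μ : Measure Ω}

theorem condExp_finsetSum_mul_of_stronglyMeasurable (s : Finset ι) {V I : ι → Ω → ℝ}
    (hV : ∀ k ∈ s, StronglyMeasurable[m] (V k)) (hVI : ∀ k ∈ s, Integrable (V k * I k) μ)
    (hI : ∀ k ∈ s, Integrable (I k) μ) :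
    μ[∑ k ∈ s, V k * I k | m] =ᵐ[μ] ∑ k ∈ s, V k * μ[I k | m] := by
  have hpull := (eventually_all_finset s).2 fun k hk =>
    condExp_mul_of_stronglyMeasurable_left (m := m) (hV k hk) (hVI k hk) (hI k hk)
  filter_upwards [condExp_finsetSum hVI m, hpull] with ω hsum hω
  rw [hsum, Finset.sum_apply, Finset.sum_apply]
  exact sum_congr rfl hω

end CondExp

section Moments

variable {Ω : Type*} {mΩ : MeasurableSpace Ω} {μ : Measure Ω}

theorem tendsto_integral_pow_of_ae_tendsto [IsFiniteMeasure μ] {X : ℕ → Ω → ℝ} {Y : Ω → ℝ}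
    (hX : ∀ n, AEStronglyMeasurable (X n) μ) (hX1 : ∀ n ω, ‖X n ω‖ ≤ 1)
    (hlim : ∀ᵐ ω ∂μ, Tendsto (X · ω) atTop (𝓝 (Y ω))) (s : ℕ) :
    Tendsto (fun n => ∫ ω, X n ω ^ s ∂μ) atTop (𝓝 (∫ ω, Y ω ^ s ∂μ)) :=
  tendsto_integral_of_dominated_convergence (fun _ => 1) (fun n => (hX n).pow s)
    (integrable_const 1)
    (fun n => ae_of_all _ fun ω => by rw [norm_pow]; exact pow_le_one₀ (norm_nonneg _) (hX1 n ω))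
    (by filter_upwards [hlim] with ω h using h.pow s)

theorem MeasureTheory.Submartingale.ae_tendsto_limitProcess_of_norm_le [IsProbabilityMeasure μ]
    {ℱ : Filtration ℕ mΩ} {f : ℕ → Ω → ℝ} (hf : Submartingale f ℱ μ) {C : ℝ}
    (hC : ∀ n ω, ‖f n ω‖ ≤ C) :
    ∀ᵐ ω ∂μ, Tendsto (f · ω) atTop (𝓝 (ℱ.limitProcess f μ ω)) :=
  hf.ae_tendsto_limitProcess (R := C.toNNReal) fun n =>
    (eLpNorm_le_of_ae_bound (ae_of_all _ (hC n))).trans (by simp)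

theorem integral_pow_pos_of_integral_pos {Y : Ω → ℝ} (hY : 0 ≤ᵐ[μ] Y) (hYi : Integrable Y μ)
    (h : 0 < ∫ ω, Y ω ∂μ) {s : ℕ} (hs : s ≠ 0) (hYs : Integrable (fun ω => Y ω ^ s) μ) :
    0 < ∫ ω, Y ω ^ s ∂μ := by
  rw [integral_pos_iff_support_of_nonneg_ae hY hYi] at h
  rw [integral_pos_iff_support_of_nonneg_ae (hY.mono fun ω h => pow_nonneg h s) hYs]
  simpa [Function.support, pow_eq_zero_iff hs] using h

end Moments

section MomentDeterminacy

open Polynomial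

theorem Continuous.integrable_of_ae_mem_Icc {ν : Measure ℝ} [IsFiniteMeasure ν] {f : ℝ → ℝ}
    (hf : Continuous f) {a b : ℝ} (hν : ∀ᵐ x ∂ν, x ∈ Set.Icc a b) : Integrable f ν := by
  rw [← Measure.restrict_eq_self_of_ae_mem hν]
  exact hf.continuousOn.integrableOn_compact isCompact_Icc

theorem integral_eval_eq_sum_coeff_mul {ν : Measure ℝ}
    (hint : ∀ i, Integrable (fun x => x ^ i) ν) (p : ℝ[X]) :
    ∫ x, p.eval x ∂ν = ∑ i ∈ range (p.natDegree + 1), p.coeff i * ∫ x, x ^ i ∂ν := by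
  simp_rw [eval_eq_sum_range]
  rw [integral_finsetSum _ fun i _ => (hint i).const_mul _]
  simp_rw [integral_const_mul]

theorem abs_integral_sub_le_of_ae_abs_sub_le {ν : Measure ℝ} [IsProbabilityMeasure ν]
    {f g : ℝ → ℝ} (hf : Integrable f ν) (hg : Integrable g ν) {ε : ℝ}
    (hfg : ∀ᵐ x ∂ν, |f x - g x| ≤ ε) : |∫ x, f x ∂ν - ∫ x, g x ∂ν| ≤ ε := by
  rw [← integral_sub hf hg]
  simpa using norm_integral_le_of_norm_le_const (μ := ν) (f := fun x => f x - g x) hfg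

theorem MeasureTheory.Measure.ext_of_integral_pow_eq_of_ae_mem_Icc {ν η : Measure ℝ}
    [IsProbabilityMeasure ν] [IsProbabilityMeasure η] {a b : ℝ} (hν : ∀ᵐ x ∂ν, x ∈ Set.Icc a b)
    (hη : ∀ᵐ x ∂η, x ∈ Set.Icc a b) (h : ∀ s : ℕ, ∫ x, x ^ s ∂ν = ∫ x, x ^ s ∂η) : ν = η := by
  have hpoly (p : ℝ[X]) : ∫ x, p.eval x ∂ν = ∫ x, p.eval x ∂η := by
    rw [integral_eval_eq_sum_coeff_mul (fun i => (continuous_pow i).integrable_of_ae_mem_Icc hν),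
      integral_eval_eq_sum_coeff_mul (fun i => (continuous_pow i).integrable_of_ae_mem_Icc hη)]
    simp_rw [h]
  refine ext_of_forall_integral_eq_of_IsFiniteMeasure fun f => eq_of_forall_dist_le fun ε hε => ?_
  obtain ⟨p, hp⟩ := exists_polynomial_near_of_continuousOn a b f f.continuous.continuousOn
    (ε / 2) (half_pos hε)
  have happrox {σ : Measure ℝ} [IsProbabilityMeasure σ] (hσ : ∀ᵐ x ∂σ, x ∈ Set.Icc a b) :
      |∫ x, f x ∂σ - ∫ x, p.eval x ∂σ| ≤ ε / 2 :=
    abs_integral_sub_le_of_ae_abs_sub_le (f.continuous.integrable_of_ae_mem_Icc hσ)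
      (p.continuous.integrable_of_ae_mem_Icc hσ)
      (hσ.mono fun x hx => by rw [abs_sub_comm]; exact (hp x hx).le)
  rw [Real.dist_eq]
  calc |∫ x, f x ∂ν - ∫ x, f x ∂η|
      ≤ |∫ x, f x ∂ν - ∫ x, p.eval x ∂ν| + |∫ x, f x ∂η - ∫ x, p.eval x ∂η| := by
        rw [hpoly, abs_sub_comm (∫ x, f x ∂η)]; exact abs_sub_le _ _ _
    _ ≤ ε := by linarith [happrox hν, happrox hη]

theorem measure_le_abs_eq_zero_of_integral_pow_le {ν : Measure ℝ} [IsFiniteMeasure ν] {a C : ℝ}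
    (ha : 1 < a) (hint : ∀ s : ℕ, Integrable (fun x => x ^ (2 * s)) ν)
    (hle : ∀ s : ℕ, ∫ x, x ^ (2 * s) ∂ν ≤ C) : ν {x | a ≤ |x|} = 0 := by
  have ha2 : 1 < a ^ 2 := one_lt_pow₀ ha two_ne_zero
  have hbound (s : ℕ) : ν.real {x | a ≤ |x|} ≤ C * (a ^ 2)⁻¹ ^ s := by
    have hsub : {x | a ≤ |x|} ⊆ {x | (a ^ 2) ^ s ≤ x ^ (2 * s)} := fun x hx => by
      rw [Set.mem_ofPred_eq, pow_mul, ← sq_abs x]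
      exact pow_le_pow_left₀ (by positivity) (pow_le_pow_left₀ (by linarith) hx 2) s
    have hmarkov := mul_meas_ge_le_integral_of_nonneg
      (ae_of_all _ fun x => by simpa [pow_mul] using pow_nonneg (sq_nonneg x) s) (hint s)
      ((a ^ 2) ^ s)
    rw [inv_pow, ← div_eq_mul_inv, le_div_iff₀' (by positivity)]
    exact (mul_le_mul_of_nonneg_left (measureReal_mono hsub) (by positivity)).trans
      (hmarkov.trans (hle s))
  have hlim : Tendsto (fun s : ℕ => C * (a ^ 2)⁻¹ ^ s) atTop (𝓝 0) := by
    simpa using (tendsto_pow_atTop_nhds_zero_of_lt_one (by positivity)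
      (inv_lt_one_of_one_lt₀ ha2)).const_mul C
  exact (measureReal_eq_zero_iff).1 <|
    le_antisymm (ge_of_tendsto' hlim hbound) measureReal_nonneg

theorem ae_abs_le_one_of_integral_pow_le {ν : Measure ℝ} [IsFiniteMeasure ν] {C : ℝ}
    (hint : ∀ s : ℕ, Integrable (fun x => x ^ (2 * s)) ν)
    (hle : ∀ s : ℕ, ∫ x, x ^ (2 * s) ∂ν ≤ C) : ∀ᵐ x ∂ν, |x| ≤ 1 := by
  have htail (j : ℕ) : ∀ᵐ x ∂ν, |x| < 1 + 1 / ((j : ℝ) + 1) := by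
    refine ae_iff.2 ?_
    simpa only [not_lt] using measure_le_abs_eq_zero_of_integral_pow_le
      (lt_add_of_pos_right 1 Nat.one_div_pos_of_nat) hint hle
  filter_upwards [ae_all_iff.2 htail] with x hx
  refine le_of_forall_pos_lt_add fun ε hε => ?_
  obtain ⟨j, hj⟩ := exists_nat_one_div_lt hε
  linarith [hx j]

theorem MeasureTheory.Measure.ext_of_integral_pow_eq_of_ae_abs_le_one {ν η : Measure ℝ}
    [IsProbabilityMeasure ν] [IsProbabilityMeasure η] (hη : ∀ᵐ x ∂η, |x| ≤ 1)
    (hne : ∀ s : ℕ, 1 ≤ s → ∫ x, x ^ s ∂η ≠ 0)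
    (h : ∀ s : ℕ, 1 ≤ s → ∫ x, x ^ s ∂ν = ∫ x, x ^ s ∂η) : ν = η := by
  have hmom (s : ℕ) : ∫ x, x ^ s ∂ν = ∫ x, x ^ s ∂η := by
    rcases Nat.eq_zero_or_pos s with rfl | hs
    · simp
    · exact h s hs
  have hνint (s : ℕ) : Integrable (fun x => x ^ s) ν := by
    rcases Nat.eq_zero_or_pos s with rfl | hs
    · simp
    · exact Integrable.of_integral_ne_zero (h s hs ▸ hne s hs)
  have hη_pow_le (s : ℕ) : ∫ x, x ^ s ∂η ≤ 1 := (le_abs_self _).trans <| by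
    simpa using norm_integral_le_of_norm_le_const (μ := η) (f := fun x => x ^ s) (C := 1)
      (hη.mono fun x hx => by rw [norm_pow]; exact pow_le_one₀ (norm_nonneg _) hx)
  have hν : ∀ᵐ x ∂ν, |x| ≤ 1 :=
    ae_abs_le_one_of_integral_pow_le (fun s => hνint _) fun s => hmom _ ▸ hη_pow_le _
  exact Measure.ext_of_integral_pow_eq_of_ae_mem_Icc (hν.mono fun x => abs_le.1)
    (hη.mono fun x => abs_le.1) hmom

theorem eq_map_of_integral_pow_eq {Ω : Type*} {mΩ : MeasurableSpace Ω} {μ : Measure Ω}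
    [IsProbabilityMeasure μ] {Y : Ω → ℝ} (hYm : Measurable Y)
    (hY : ∀ᵐ ω ∂μ, Y ω ∈ Set.Icc 0 1) (hpos : 0 < ∫ ω, Y ω ∂μ) {ν : Measure ℝ}
    [IsProbabilityMeasure ν] (h : ∀ s : ℕ, 1 ≤ s → ∫ x, x ^ s ∂ν = ∫ ω, Y ω ^ s ∂μ) :
    ν = μ.map Y := by
  have := Measure.isProbabilityMeasure_map (μ := μ) hYm.aemeasurable
  have hmap (s : ℕ) : ∫ x, x ^ s ∂(μ.map Y) = ∫ ω, Y ω ^ s ∂μ :=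
    integral_map hYm.aemeasurable (continuous_pow s).aestronglyMeasurable
  have hYs (s : ℕ) : Integrable (fun ω => Y ω ^ s) μ :=
    Integrable.of_mem_Icc 0 1 (hYm.pow_const s).aemeasurable
      (hY.mono fun ω h => ⟨pow_nonneg h.1 s, pow_le_one₀ h.1 h.2⟩)
  refine Measure.ext_of_integral_pow_eq_of_ae_abs_le_one ?_ (fun s hs => ?_)
    (fun s hs => by rw [h s hs, hmap])
  · rw [ae_map_iff hYm.aemeasurable (measurableSet_le (by fun_prop) (by fun_prop))]
    exact hY.mono fun ω h => abs_le.2 ⟨by linarith [h.1], h.2⟩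
  · rw [hmap]
    exact (integral_pow_pos_of_integral_pos (hY.mono fun _ h => h.1) (by simpa using hYs 1) hpos
      (by omega) (hYs s)).ne'

end MomentDeterminacy

theorem le_urnT (W0 B0 m c n : ℕ) : W0 + B0 ≤ urnT W0 B0 m c n := Nat.le_add_right _ _

theorem urnT_succ (W0 B0 m c n : ℕ) :
    urnT W0 B0 m c (n + 1) = urnT W0 B0 m c n + m * c := by
  unfold urnT; ring

noncomputable def urnFraction {Ω : Type*} (W0 B0 m c : ℕ) (W : ℕ → Ω → ℕ) (n : ℕ) (ω : Ω) :
    ℝ :=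
  W n ω / urnT W0 B0 m c n

theorem tendsto_urnT_div (W0 B0 : ℕ) {m c : ℕ} (hm : 1 ≤ m) (hc : 1 ≤ c) :
    Tendsto (fun n : ℕ => (urnT W0 B0 m c n : ℝ) / (n * m * c)) atTop (𝓝 1) := by
  have hmc : (m * c : ℝ) ≠ 0 := by positivity
  have h := (tendsto_natCast_div_add_atTop (((W0 + B0 : ℕ) : ℝ) / (m * c))).inv₀ one_ne_zero
  rw [inv_one] at h
  refine h.congr fun n => ?_
  rw [inv_div, urnT]
  push_cast
  field_simp
  ring

section Urn

variable {Ω : Type*} {mΩ : MeasurableSpace Ω} {μ : Measure Ω} {ℱ : Filtration ℕ mΩ}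
  {W0 B0 m c : ℕ} {W : ℕ → Ω → ℕ}

theorem urn_condExp_succ [IsFiniteMeasure μ] (hc : 1 ≤ c) (hT0 : m ≤ W0 + B0)
    (hadapt : Adapted ℱ (fun n ω => (W n ω : ℝ)))
    (hbnd : ∀ n ω, W n ω ≤ urnT W0 B0 m c n)
    (hmove : ∀ n, ∀ᵐ ω ∂μ, ∃ k ≤ m, W (n + 1) ω = W n ω + c * k)
    (hstep : ∀ n, ∀ k ≤ m,
      μ[fun ω => if W (n + 1) ω = W n ω + c * k then (1 : ℝ) else 0|ℱ n] =ᵐ[μ]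
        fun ω => (Nat.choose (W n ω) k *
            Nat.choose (urnT W0 B0 m c n - W n ω) (m - k) : ℝ) /
          (Nat.choose (urnT W0 B0 m c n) m : ℝ)) (n : ℕ) :
    μ[fun ω => (W (n + 1) ω : ℝ) | ℱ n] =ᵐ[μ]
      fun ω => W n ω * ((urnT W0 B0 m c (n + 1) : ℝ) / urnT W0 B0 m c n) := by
  set T := urnT W0 B0 m c n
  let V (k : ℕ) (ω : Ω) : ℝ := W n ω + c * k
  let I (k : ℕ) (ω : Ω) : ℝ := if W (n + 1) ω = W n ω + c * k then 1 else 0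
  have hWm (j : ℕ) : StronglyMeasurable (fun ω => (W j ω : ℝ)) :=
    ((hadapt j).mono (ℱ.le j) le_rfl).stronglyMeasurable
  have hV (k : ℕ) : StronglyMeasurable[ℱ n] (V k) :=
    (hadapt n).stronglyMeasurable.add stronglyMeasurable_const
  have hI (k : ℕ) : Integrable (I k) μ := by
    have hset : MeasurableSet {ω | (W (n + 1) ω : ℝ) = V k ω} :=
      measurableSet_eq_fun (hWm (n + 1)).measurable ((hV k).mono (ℱ.le n)).measurable
    refine Integrable.of_mem_Icc 0 1
      (Measurable.ite ?_ measurable_const measurable_const).aemeasurable (ae_of_all _ fun ω => ?_)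
    · convert hset using 3
      simp only [V]
      norm_cast
    · simp only [I]; split_ifs <;> simp
  have hVI (k : ℕ) : Integrable (V k * I k) μ := by
    refine (hI k).bdd_mul (c := T + c * k) ((hV k).mono (ℱ.le n)).aestronglyMeasurable
      (ae_of_all _ fun ω => ?_)
    rw [Real.norm_eq_abs, abs_of_nonneg (by positivity)]
    simp only [V]
    gcongr
    exact_mod_cast hbnd n ω
  have hdecomp : (fun ω => (W (n + 1) ω : ℝ)) =ᵐ[μ] ∑ k ∈ range (m + 1), V k * I k := by
    filter_upwards [hmove n] with ω ⟨j, hjm, hj⟩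
    rw [Finset.sum_apply, sum_eq_single_of_mem j (mem_range_succ_iff.2 hjm)]
    · simp [V, I, hj]
    · intro k _ hkj
      have : W (n + 1) ω ≠ W n ω + c * k := by
        rw [hj]; intro h
        exact hkj (Nat.eq_of_mul_eq_mul_left hc (by omega)).symm
      simp [I, this]
  have hprob := (eventually_all_finset (range (m + 1))).2 fun k hk =>
    hstep n k (mem_range_succ_iff.1 hk)
  filter_upwards [condExp_congr_ae hdecomp, condExp_finsetSum_mul_of_stronglyMeasurable _
    (fun k _ => hV k) (fun k _ => hVI k) (fun k _ => hI k), hprob] with ω h1 h2 h3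
  rw [h1, h2, Finset.sum_apply]
  simp only [Pi.mul_apply, V]
  rw [sum_congr rfl fun k hk => congrArg _ (h3 k hk),
    sum_range_add_mul_choose_mul_choose_div _ _ _ _ (hbnd n ω) (hT0.trans (le_urnT ..)), urnT_succ]
  push_cast
  ring

theorem urnFraction_mem_Icc (hbnd : ∀ n ω, W n ω ≤ urnT W0 B0 m c n) (n : ℕ) (ω : Ω) :
    urnFraction W0 B0 m c W n ω ∈ Set.Icc 0 1 :=
  ⟨by unfold urnFraction; positivity,
    div_le_one_of_le₀ (by exact_mod_cast hbnd n ω) (by positivity)⟩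

theorem norm_urnFraction_le_one (hbnd : ∀ n ω, W n ω ≤ urnT W0 B0 m c n) (n : ℕ) (ω : Ω) :
    ‖urnFraction W0 B0 m c W n ω‖ ≤ 1 := by
  rw [Real.norm_of_nonneg (urnFraction_mem_Icc hbnd n ω).1]
  exact (urnFraction_mem_Icc hbnd n ω).2

theorem urnFraction_stronglyAdapted (hadapt : Adapted ℱ (fun n ω => (W n ω : ℝ))) :
    StronglyAdapted ℱ (urnFraction W0 B0 m c W) := fun n =>
  ((hadapt n).div_const _).stronglyMeasurable

theorem urnFraction_martingale [IsFiniteMeasure μ] (hT : 0 < W0 + B0) (hc : 1 ≤ c)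
    (hT0 : m ≤ W0 + B0) (hadapt : Adapted ℱ (fun n ω => (W n ω : ℝ)))
    (hbnd : ∀ n ω, W n ω ≤ urnT W0 B0 m c n)
    (hmove : ∀ n, ∀ᵐ ω ∂μ, ∃ k ≤ m, W (n + 1) ω = W n ω + c * k)
    (hstep : ∀ n, ∀ k ≤ m,
      μ[fun ω => if W (n + 1) ω = W n ω + c * k then (1 : ℝ) else 0|ℱ n] =ᵐ[μ]
        fun ω => (Nat.choose (W n ω) k *
            Nat.choose (urnT W0 B0 m c n - W n ω) (m - k) : ℝ) /
          (Nat.choose (urnT W0 B0 m c n) m : ℝ)) :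
    Martingale (urnFraction W0 B0 m c W) ℱ μ := by
  have hadapt' := urnFraction_stronglyAdapted (W0 := W0) (B0 := B0) (m := m) (c := c) hadapt
  refine martingale_nat hadapt' (fun n => Integrable.of_mem_Icc 0 1
    ((hadapt' n).mono (ℱ.le n)).aemeasurable (ae_of_all _ (urnFraction_mem_Icc hbnd n)))
    fun n => ?_
  have hsmul : urnFraction W0 B0 m c W (n + 1)
      = (urnT W0 B0 m c (n + 1) : ℝ)⁻¹ • fun ω => (W (n + 1) ω : ℝ) := by
    ext ω; simp [urnFraction, div_eq_inv_mul]
  have hTn : (urnT W0 B0 m c (n + 1) : ℝ) ≠ 0 := by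
    exact_mod_cast (hT.trans_le (le_urnT ..)).ne'
  rw [hsmul]
  filter_upwards [condExp_smul (μ := μ) (urnT W0 B0 m c (n + 1) : ℝ)⁻¹
      (fun ω => (W (n + 1) ω : ℝ)) (ℱ n),
    urn_condExp_succ hc hT0 hadapt hbnd hmove hstep n] with ω h1 h2
  rw [h1, Pi.smul_apply, h2, urnFraction, smul_eq_mul]
  field_simp

theorem integral_urnFraction [IsProbabilityMeasure μ]
    (hmart : Martingale (urnFraction W0 B0 m c W) ℱ μ) (hinit : ∀ ω, W 0 ω = W0) (n : ℕ) :
    ∫ ω, urnFraction W0 B0 m c W n ω ∂μ = W0 / (W0 + B0) := by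
  rw [← setIntegral_univ, ← hmart.setIntegral_eq (Nat.zero_le n) MeasurableSet.univ,
    setIntegral_univ]
  simp [urnFraction, hinit, urnT]

theorem integral_eq_of_ae_tendsto_urnFraction [IsProbabilityMeasure μ]
    (hadapt : Adapted ℱ (fun n ω => (W n ω : ℝ))) (hbnd : ∀ n ω, W n ω ≤ urnT W0 B0 m c n)
    (hmart : Martingale (urnFraction W0 B0 m c W) ℱ μ) (hinit : ∀ ω, W 0 ω = W0) {Y : Ω → ℝ}
    (hlim : ∀ᵐ ω ∂μ, Tendsto (urnFraction W0 B0 m c W · ω) atTop (𝓝 (Y ω))) :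
    ∫ ω, Y ω ∂μ = W0 / (W0 + B0) := by
  have h := tendsto_integral_pow_of_ae_tendsto
    (fun n => ((urnFraction_stronglyAdapted hadapt n).mono (ℱ.le n)).aestronglyMeasurable)
    (norm_urnFraction_le_one hbnd) hlim 1
  simp_rw [pow_one, integral_urnFraction hmart hinit] at h
  exact tendsto_nhds_unique tendsto_const_nhds h |>.symm

theorem integral_pow_le_urnT [IsProbabilityMeasure μ] (hbnd : ∀ n ω, W n ω ≤ urnT W0 B0 m c n)
    (s n : ℕ) : ∫ ω, (W n ω : ℝ) ^ s ∂μ ≤ ((n : ℝ) * m * c + ((W0 : ℝ) + B0)) ^ s := by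
  have hle : ∀ᵐ ω ∂μ, ‖(W n ω : ℝ) ^ s‖ ≤ (urnT W0 B0 m c n : ℝ) ^ s := ae_of_all _ fun ω => by
    rw [norm_pow, Real.norm_natCast]
    exact pow_le_pow_left₀ (by positivity) (by exact_mod_cast hbnd n ω) s
  refine (le_abs_self _).trans ((norm_integral_le_of_norm_le_const hle).trans (le_of_eq ?_))
  simp only [probReal_univ, mul_one, urnT]
  push_cast
  ring

theorem tendsto_integral_pow_div_of_ae_tendsto_urnFraction [IsFiniteMeasure μ]
    (hT : 0 < W0 + B0) (hm : 1 ≤ m) (hc : 1 ≤ c) (hadapt : Adapted ℱ (fun n ω => (W n ω : ℝ)))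
    (hbnd : ∀ n ω, W n ω ≤ urnT W0 B0 m c n) {Y : Ω → ℝ}
    (hlim : ∀ᵐ ω ∂μ, Tendsto (urnFraction W0 B0 m c W · ω) atTop (𝓝 (Y ω))) (s : ℕ) :
    Tendsto (fun n : ℕ => (∫ ω, (W n ω : ℝ) ^ s ∂μ) / ((n : ℝ) * m * c) ^ s) atTop
      (𝓝 (∫ ω, Y ω ^ s ∂μ)) := by
  have hW (n : ℕ) : ∫ ω, (W n ω : ℝ) ^ s ∂μ
      = (urnT W0 B0 m c n : ℝ) ^ s * ∫ ω, urnFraction W0 B0 m c W n ω ^ s ∂μ := by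
    have hTn : (urnT W0 B0 m c n : ℝ) ≠ 0 := by exact_mod_cast (hT.trans_le (le_urnT ..)).ne'
    rw [← integral_const_mul]
    simp_rw [urnFraction, div_pow, mul_div_cancel₀ _ (pow_ne_zero s hTn)]
  have hmoments := tendsto_integral_pow_of_ae_tendsto
    (fun n => ((urnFraction_stronglyAdapted hadapt n).mono (ℱ.le n)).aestronglyMeasurable)
    (norm_urnFraction_le_one hbnd) hlim s
  have h := ((tendsto_urnT_div W0 B0 hm hc).pow s).mul hmoments
  rw [one_pow, one_mul] at h
  exact h.congr fun n => by rw [hW, div_pow, div_mul_eq_mul_div]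

end Urn

theorem modelM_moment_convergence_general
    {Ω : Type*} {mΩ : MeasurableSpace Ω} (μ : Measure Ω) [IsProbabilityMeasure μ]
    (ℱ : Filtration ℕ mΩ)
    (W0 B0 m c : ℕ) (hm : 1 ≤ m) (hc : 1 ≤ c) (hW0 : 1 ≤ W0)
    (hT0 : m ≤ W0 + B0)
    (W : ℕ → Ω → ℕ)
    (hinit : ∀ ω, W 0 ω = W0)
    (hadapt : Adapted ℱ (fun n ω => (W n ω : ℝ)))
    (hbnd : ∀ n ω, W n ω ≤ urnT W0 B0 m c n)
    (hmove : ∀ n, ∀ᵐ ω ∂μ, ∃ k ≤ m, W (n + 1) ω = W n ω + c * k)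
    (hstep : ∀ n, ∀ k ≤ m,
      μ[fun ω => if W (n + 1) ω = W n ω + c * k then (1 : ℝ) else 0|ℱ n] =ᵐ[μ]
        fun ω => (Nat.choose (W n ω) k *
            Nat.choose (urnT W0 B0 m c n - W n ω) (m - k) : ℝ) /
          (Nat.choose (urnT W0 B0 m c n) m : ℝ)) :
    (∀ s : ℕ, 1 ≤ s → ∀ n : ℕ,
      (∫ ω, (W n ω : ℝ) ^ s ∂μ) ≤ ((n : ℝ) * m * c + ((W0 : ℝ) + B0)) ^ s) ∧
    (∀ s : ℕ, 1 ≤ s → ∃ L : ℝ,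
      Tendsto (fun n : ℕ => (∫ ω, (W n ω : ℝ) ^ s ∂μ) / (n : ℝ) ^ s) atTop (nhds L)) ∧
    ∃ Wlim : Ω → ℝ, Measurable Wlim ∧
      (∀ᵐ ω ∂μ, Tendsto (fun n => (W n ω : ℝ) / (urnT W0 B0 m c n : ℝ)) atTop
        (nhds (Wlim ω))) ∧
      (∀ s : ℕ, 1 ≤ s →
        Tendsto (fun n : ℕ => (∫ ω, (W n ω : ℝ) ^ s ∂μ) / ((n : ℝ) * m * c) ^ s) atTop
          (nhds (∫ ω, (Wlim ω) ^ s ∂μ))) ∧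
      (∀ ν : Measure ℝ, IsProbabilityMeasure ν →
        (∀ s : ℕ, 1 ≤ s → (∫ x, x ^ s ∂ν) = ∫ ω, (Wlim ω) ^ s ∂μ) →
        ν = Measure.map Wlim μ) := by
  have hT : 0 < W0 + B0 := by omega
  have hX01 := urnFraction_mem_Icc hbnd
  have hmart := urnFraction_martingale hT hc hT0 hadapt hbnd hmove hstep
  set Wlim := ℱ.limitProcess (urnFraction W0 B0 m c W) μ
  have hlim : ∀ᵐ ω ∂μ, Tendsto (urnFraction W0 B0 m c W · ω) atTop (𝓝 (Wlim ω)) :=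
    hmart.submartingale.ae_tendsto_limitProcess_of_norm_le (norm_urnFraction_le_one hbnd)
  have hmeas : Measurable Wlim := Filtration.stronglyMeasurable_limit_process'.measurable
  have hscaled := tendsto_integral_pow_div_of_ae_tendsto_urnFraction hT hm hc hadapt hbnd hlim
  have hWlim01 : ∀ᵐ ω ∂μ, Wlim ω ∈ Set.Icc 0 1 := hlim.mono fun ω h =>
    isClosed_Icc.mem_of_tendsto h (.of_forall fun n => hX01 n ω)
  have hmean : 0 < ∫ ω, Wlim ω ∂μ := by
    rw [integral_eq_of_ae_tendsto_urnFraction hadapt hbnd hmart hinit hlim]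
    positivity
  refine ⟨fun s _ => integral_pow_le_urnT hbnd s, fun s _ => ?_, Wlim, hmeas, hlim,
    fun s _ => hscaled s, fun ν _ hν => eq_map_of_integral_pow_eq hmeas hWlim01 hmean hν⟩
  have hmc : ((m : ℝ) * c) ^ s ≠ 0 := by positivity
  refine ⟨_, ((hscaled s).mul_const (((m : ℝ) * c) ^ s)).congr fun n => ?_⟩
  rw [mul_assoc, mul_pow, ← div_div, div_mul_cancel₀ _ hmc]

/-- In model `M`, for every `s ≥ 1` the limit `lim_{n→∞} E(W_n^s)/n^s` exists and is
finite; moreover `E(W_n^s) ≤ (n·m·c + T_0)^s`, the almost-sure limit `W_∞` of `W_n/T_n`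
has moments `E(W_∞^s) = lim_{n→∞} E(W_n^s)/(n·m·c)^s`, and the distribution of `W_∞` is
uniquely determined by these moments. -/
theorem modelM_moment_convergence
    {Ω : Type*} {mΩ : MeasurableSpace Ω} (μ : Measure Ω) [IsProbabilityMeasure μ]
    (ℱ : Filtration ℕ mΩ)
    (W0 B0 m c : ℕ) (hm : 1 ≤ m) (hc : 1 ≤ c) (hW0 : 1 ≤ W0) (hB0 : 1 ≤ B0)
    (hT0 : m ≤ W0 + B0)
    (W : ℕ → Ω → ℕ)
    (hinit : ∀ ω, W 0 ω = W0)
    (hadapt : Adapted ℱ (fun n ω => (W n ω : ℝ)))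
    (hbnd : ∀ n ω, W n ω ≤ urnT W0 B0 m c n)
    (hmove : ∀ n, ∀ᵐ ω ∂μ, ∃ k ≤ m, W (n + 1) ω = W n ω + c * k)
    (hstep : ∀ n, ∀ k ≤ m,
      μ[fun ω => if W (n + 1) ω = W n ω + c * k then (1 : ℝ) else 0|ℱ n] =ᵐ[μ]
        fun ω => (Nat.choose (W n ω) k *
            Nat.choose (urnT W0 B0 m c n - W n ω) (m - k) : ℝ) /
          (Nat.choose (urnT W0 B0 m c n) m : ℝ)) :
    (∀ s : ℕ, 1 ≤ s → ∀ n : ℕ,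
      (∫ ω, (W n ω : ℝ) ^ s ∂μ) ≤ ((n : ℝ) * m * c + ((W0 : ℝ) + B0)) ^ s) ∧
    (∀ s : ℕ, 1 ≤ s → ∃ L : ℝ,
      Tendsto (fun n : ℕ => (∫ ω, (W n ω : ℝ) ^ s ∂μ) / (n : ℝ) ^ s) atTop (nhds L)) ∧
    ∃ Wlim : Ω → ℝ, Measurable Wlim ∧
      (∀ᵐ ω ∂μ, Tendsto (fun n => (W n ω : ℝ) / (urnT W0 B0 m c n : ℝ)) atTop
        (nhds (Wlim ω))) ∧
      (∀ s : ℕ, 1 ≤ s →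
        Tendsto (fun n : ℕ => (∫ ω, (W n ω : ℝ) ^ s ∂μ) / ((n : ℝ) * m * c) ^ s) atTop
          (nhds (∫ ω, (Wlim ω) ^ s ∂μ))) ∧
      (∀ ν : Measure ℝ, IsProbabilityMeasure ν →
        (∀ s : ℕ, 1 ≤ s → (∫ x, x ^ s ∂ν) = ∫ ω, (Wlim ω) ^ s ∂μ) →
        ν = Measure.map Wlim μ) :=
  modelM_moment_convergence_general μ ℱ W0 B0 m c hm hc hW0 hT0 W hinit hadapt hbnd hmove hstep
end
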